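/- Let g : [0,T] → R be differentiable and satisfy g'(t) = -g(t)² + K² with g(0) ≥ 0, where K ≥ 1 and T ≥ 1. Then for all t ∈ [T/2, T], g(t) ≤ K·(1 + 2/(e^T - 1)). -/

import Mathlib

/-!
The functions `t ↦ K + 2K / (c e^{2Kt} - 1)`, `c > 1`, solve the Riccati equation, stay above `K`
and start at `K + 2K / (c - 1)`, which can be made as large as needed. Since `x ↦ -x² + K²` is
decreasing on `[0, ∞)`, any solution starting below one of them stays below it, and each of them
is at most `K coth(Kt) = K + 2K / (e^{2Kt} - 1) ≤ K + 2K / (e^T - 1)` once `2Kt ≥ T`.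
-/

open Set Real

theorem le_of_hasDerivAt_of_strictAntiOn {F g h : ℝ → ℝ} {a b m : ℝ}
    (hF : StrictAntiOn F (Ici m))
    (hg : ∀ t ∈ Icc a b, HasDerivAt g (F (g t)) t)
    (hh : ∀ t ∈ Icc a b, HasDerivAt h (F (h t)) t)
    (hm : ∀ t ∈ Icc a b, m ≤ h t) (ha : g a ≤ h a) :
    ∀ t ∈ Icc a b, g t ≤ h t := by
  intro t ht
  refine le_of_forall_pos_le_add fun ε hε => ?_
  have hg' : ∀ s ∈ Ico a b, HasDerivWithinAt g (F (g s)) (Ici s) s :=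
    fun s hs => (hg s (Ico_subset_Icc_self hs)).hasDerivWithinAt
  have hh' : ∀ s ∈ Ico a b, HasDerivWithinAt (fun s => h s + ε) (F (h s)) (Ici s) s :=
    fun s hs => ((hh s (Ico_subset_Icc_self hs)).add_const ε).hasDerivWithinAt
  -- `h + ε` is a strict supersolution: where `g` touches it, `g' = F (h + ε) < F h`.
  have hstrict : ∀ s ∈ Ico a b, g s = h s + ε → F (g s) < F (h s) := by
    intro s hs hgs
    have hms := hm s (Ico_subset_Icc_self hs)
    rw [hgs]
    exact hF (mem_Ici.2 hms) (mem_Ici.2 (by linarith)) (by linarith)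
  exact image_le_of_deriv_right_lt_deriv_boundary' (B := fun s => h s + ε)
    (HasDerivAt.continuousOn hg) hg' (by linarith)
    ((HasDerivAt.continuousOn hh).add continuousOn_const) hh' hstrict ht

theorem strictAntiOn_neg_sq_add_const (C : ℝ) :
    StrictAntiOn (fun x : ℝ => -x ^ 2 + C) (Ici 0) := by
  intro x hx y _ hxy
  have : x ^ 2 < y ^ 2 := pow_lt_pow_left₀ hxy (mem_Ici.1 hx) two_ne_zero
  dsimp only
  linarith

/-- The parameter is `c = (x₀ + K) / (x₀ - K)` for the initial value `x₀`. -/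
noncomputable def riccatiSol (K c t : ℝ) : ℝ := K + 2 * K / (c * exp (2 * K * t) - 1)

theorem hasDerivAt_riccatiSol {K c t : ℝ} (hne : c * exp (2 * K * t) - 1 ≠ 0) :
    HasDerivAt (riccatiSol K c) (-riccatiSol K c t ^ 2 + K ^ 2) t := by
  have hexp : HasDerivAt (fun s => c * exp (2 * K * s) - 1) (c * exp (2 * K * t) * (2 * K)) t := by
    simpa [mul_assoc] using
      ((((hasDerivAt_id t).const_mul (2 * K)).exp).const_mul c).sub_const 1
  refine (((hasDerivAt_const t (2 * K)).div hexp hne).const_add K).congr_deriv ?_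
  rw [riccatiSol]
  field_simp
  ring

theorem riccatiSol_zero (K c : ℝ) : riccatiSol K c 0 = K + 2 * K / (c - 1) := by
  simp [riccatiSol]

theorem one_lt_mul_exp {K c t : ℝ} (hc : 1 < c) (hK : 0 ≤ K) (ht : 0 ≤ t) :
    1 < c * exp (2 * K * t) := by
  have := one_le_exp (by positivity : 0 ≤ 2 * K * t)
  nlinarith

theorem le_riccatiSol {K c t : ℝ} (hc : 1 < c) (hK : 0 ≤ K) (ht : 0 ≤ t) :
    K ≤ riccatiSol K c t := by
  have := one_lt_mul_exp hc hK ht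
  exact le_add_of_nonneg_right (div_nonneg (by positivity) (by linarith))

theorem riccatiSol_le {K c s t : ℝ} (hc : 1 ≤ c) (hK : 0 ≤ K) (hs : 0 < s)
    (hst : s ≤ 2 * K * t) :
    riccatiSol K c t ≤ K + 2 * K / (exp s - 1) := by
  have hs1 : 0 < exp s - 1 := sub_pos.2 (one_lt_exp_iff.2 hs)
  have : exp s ≤ c * exp (2 * K * t) := by
    have := exp_le_exp.2 hst
    nlinarith [exp_pos (2 * K * t)]
  unfold riccatiSol
  gcongr

theorem riccati_ode_uniform_bound_general (g : ℝ → ℝ) (K T : ℝ) (hK : 1 ≤ K) (hT : 1 ≤ T)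
    (hderiv : ∀ t ∈ Set.Icc (0 : ℝ) T, HasDerivAt g (-(g t) ^ 2 + K ^ 2) t) :
    ∀ t ∈ Set.Icc (T / 2) T, g t ≤ K * (1 + 2 / (Real.exp T - 1)) := by
  intro t ⟨hTt, htT⟩
  have hK0 : 0 ≤ K := by linarith
  set c := 1 + 2 * K / (|g 0| + 1)
  have hc : 1 < c := lt_add_of_pos_right 1 (by positivity)
  have hstart : g 0 ≤ riccatiSol K c 0 := by
    rw [riccatiSol_zero, add_sub_cancel_left, div_div_cancel₀ (by positivity)]
    linarith [le_abs_self (g 0)]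
  have hcomp := le_of_hasDerivAt_of_strictAntiOn (strictAntiOn_neg_sq_add_const (K ^ 2)) hderiv
    (fun s hs => hasDerivAt_riccatiSol (sub_ne_zero.2 (one_lt_mul_exp hc hK0 hs.1).ne'))
    (fun s hs => hK0.trans (le_riccatiSol hc hK0 hs.1)) hstart
  calc g t ≤ riccatiSol K c t := hcomp t ⟨by linarith, htT⟩
    _ ≤ K + 2 * K / (exp T - 1) := riccatiSol_le hc.le hK0 (by linarith) (by nlinarith)
    _ = K * (1 + 2 / (exp T - 1)) := by ring

/-- Uniform bound for the Riccati ODE: if `g` is differentiable on `[0,T]` with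
`g' = -g² + K²`, `g 0 ≥ 0`, `K ≥ 1`, `T ≥ 1`, then
`g t ≤ K·(1 + 2/(e^T - 1))` for all `t ∈ [T/2, T]`. -/
theorem riccati_ode_uniform_bound (g : ℝ → ℝ) (K T : ℝ) (hK : 1 ≤ K) (hT : 1 ≤ T)
    (hg0 : 0 ≤ g 0)
    (hderiv : ∀ t ∈ Set.Icc (0 : ℝ) T, HasDerivAt g (-(g t) ^ 2 + K ^ 2) t) :
    ∀ t ∈ Set.Icc (T / 2) T, g t ≤ K * (1 + 2 / (Real.exp T - 1)) :=
  riccati_ode_uniform_bound_general g K T hK hT hderiv
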